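/- arXiv:0809.5173 — 10 statements merged into one kernel-verified Lean document; each statement's English description precedes it below -/
import Mathlib

section
/- Let x and y be intervals. Then: (i) if l(y) < l(x), there is a unique interval A with l(A) > 0 such that (x,y) ~ (A,0); (ii) if l(x) < l(y), there is a unique interval A with l(A) > 0 such that (x,y) ~ (0,A); (iii) if l(x) = l(y), there is a unique real number α such that (x,y) ~ ([α,α], 0). -/
/-! `(x, y) ~ (A, 0)` says `A = x - y` componentwise, and `l(x - y) = l(x) - l(y)`. So in (i)
and (ii) the only candidates are `x - y` and `y - x`, whose length is positive exactly under the
hypothesis, while in (iii) `x - y` is a degenerate interval `[α, α]`. -/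

theorem Prod.snd_sub_fst_sub {G : Type*} [AddCommGroup G] (x y : G × G) :
    (x - y).2 - (x - y).1 = (x.2 - x.1) - (y.2 - y.1) := by
  simp only [Prod.fst_sub, Prod.snd_sub]
  abel

theorem add_zero_eq_add_iff_eq_sub {G : Type*} [AddCommGroup G] {x y a : G} :
    x + 0 = y + a ↔ a = x - y := by
  rw [add_zero, eq_sub_iff_add_eq', eq_comm]

theorem add_eq_add_zero_iff_eq_sub {G : Type*} [AddCommGroup G] {x y a : G} :
    x + a = y + 0 ↔ a = y - x := by
  rw [add_zero, eq_sub_iff_add_eq', eq_comm]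

theorem existsUnique_and_eq {α : Type*} {p : α → Prop} {c : α} (hc : p c) :
    ∃! a, p a ∧ a = c :=
  ⟨c, ⟨hc, rfl⟩, fun _ ha => ha.2⟩

theorem Prod.existsUnique_mk_self_eq {α : Type*} {p : α × α} (hp : p.1 = p.2) :
    ∃! a, (a, a) = p :=
  ⟨p.1, Prod.ext rfl hp, fun _ ha => congrArg Prod.fst ha⟩

theorem interval_pair_normal_form_general (x y : ℝ × ℝ) :
    -- (i) if `l(y) < l(x)`, a unique nondegenerate interval `A` with `(x,y) ~ (A,0)`
    (y.2 - y.1 < x.2 - x.1 →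
      ∃! A : ℝ × ℝ, (A.1 ≤ A.2 ∧ 0 < A.2 - A.1) ∧ x + ((0 : ℝ), (0 : ℝ)) = y + A) ∧
    -- (ii) if `l(x) < l(y)`, a unique nondegenerate interval `A` with `(x,y) ~ (0,A)`
    (x.2 - x.1 < y.2 - y.1 →
      ∃! A : ℝ × ℝ, (A.1 ≤ A.2 ∧ 0 < A.2 - A.1) ∧ x + A = y + ((0 : ℝ), (0 : ℝ))) ∧
    -- (iii) if `l(x) = l(y)`, a unique real `α` with `(x,y) ~ ([α,α],0)`
    (x.2 - x.1 = y.2 - y.1 →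
      ∃! α : ℝ, x + ((0 : ℝ), (0 : ℝ)) = y + (α, α)) := by
  simp only [Prod.mk_zero_zero, add_zero_eq_add_iff_eq_sub, add_eq_add_zero_iff_eq_sub]
  have hxy := Prod.snd_sub_fst_sub x y
  have hyx := Prod.snd_sub_fst_sub y x
  refine ⟨fun h => ?_, fun h => ?_, fun h => ?_⟩
  · exact existsUnique_and_eq ⟨by linarith, by linarith⟩
  · exact existsUnique_and_eq ⟨by linarith, by linarith⟩
  · exact Prod.existsUnique_mk_self_eq (by linarith)

/-- Normal forms for classes of pairs of intervals under
`(x,y) ~ (z,t) ⟺ x + t = y + z`. -/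
theorem interval_pair_normal_form (x y : ℝ × ℝ) (hx : x.1 ≤ x.2) (hy : y.1 ≤ y.2) :
    -- (i) if `l(y) < l(x)`, a unique nondegenerate interval `A` with `(x,y) ~ (A,0)`
    (y.2 - y.1 < x.2 - x.1 →
      ∃! A : ℝ × ℝ, (A.1 ≤ A.2 ∧ 0 < A.2 - A.1) ∧ x + ((0 : ℝ), (0 : ℝ)) = y + A) ∧
    -- (ii) if `l(x) < l(y)`, a unique nondegenerate interval `A` with `(x,y) ~ (0,A)`
    (x.2 - x.1 < y.2 - y.1 →
      ∃! A : ℝ × ℝ, (A.1 ≤ A.2 ∧ 0 < A.2 - A.1) ∧ x + A = y + ((0 : ℝ), (0 : ℝ))) ∧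
    -- (iii) if `l(x) = l(y)`, a unique real `α` with `(x,y) ~ ([α,α],0)`
    (x.2 - x.1 = y.2 - y.1 →
      ∃! α : ℝ, x + ((0 : ℝ), (0 : ℝ)) = y + (α, α)) :=
  interval_pair_normal_form_general x y
end

section
/- Let a ≤ b and c ≤ d be real numbers, and let m = min(ac, ad, bc, bd) and M = max(ac, ad, bc, bd), so that [m, M] is the classical product of the intervals [a,b] and [c,d]. Then the norm is submultiplicative: (M − m) + |M + m|/2 ≤ ((b − a) + |a + b|/2) · ((d − c) + |c + d|/2). -/
/-! Writing `A = max |a| |b|` and `C = max |c| |d|`, the norm of `[a, b]` is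
`A + (b - a) / 2`. The product interval lies in `[-A C, A C]` and, since
`x y - x' y' = x (y - y') + (x - x') y'`, its length is at most `A (d - c) + C (b - a)`.
Hence its norm is at most `A C + (A (d - c) + C (b - a)) / 2`, which falls short of
`(A + (b - a) / 2) (C + (d - c) / 2)` by `(b - a) (d - c) / 4 ≥ 0`. -/

open Set

section Corners

variable {α β γ : Type*} [LinearOrder γ] (f : α → β → γ) (a b : α) (c d : β)

theorem exists_mem_pair_eq_max_max :
    ∃ x ∈ ({a, b} : Set α), ∃ y ∈ ({c, d} : Set β),
      max (max (f a c) (f a d)) (max (f b c) (f b d)) = f x y := by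
  rcases max_choice (max (f a c) (f a d)) (max (f b c) (f b d)) with h | h <;> rw [h]
  · rcases max_choice (f a c) (f a d) with h' | h' <;> rw [h'] <;> simp
  · rcases max_choice (f b c) (f b d) with h' | h' <;> rw [h'] <;> simp

theorem exists_mem_pair_eq_min_min :
    ∃ x ∈ ({a, b} : Set α), ∃ y ∈ ({c, d} : Set β),
      min (min (f a c) (f a d)) (min (f b c) (f b d)) = f x y := by
  rcases min_choice (min (f a c) (f a d)) (min (f b c) (f b d)) with h | h <;> rw [h]
  · rcases min_choice (f a c) (f a d) with h' | h' <;> rw [h'] <;> simp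
  · rcases min_choice (f b c) (f b d) with h' | h' <;> rw [h'] <;> simp

end Corners

theorem pair_subset_Icc {α : Type*} [Preorder α] {a b : α} (hab : a ≤ b) :
    ({a, b} : Set α) ⊆ Icc a b :=
  insert_subset_iff.2 ⟨left_mem_Icc.2 hab, singleton_subset_iff.2 (right_mem_Icc.2 hab)⟩

section Products

variable {α : Type*} [CommRing α] [LinearOrder α] [IsStrictOrderedRing α] {a b c d x y x' y' : α}

theorem abs_le_max_abs_of_mem_Icc (hx : x ∈ Icc a b) : |x| ≤ max |a| |b| :=
  abs_le_max_abs_abs hx.1 hx.2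

theorem abs_mul_le_of_mem_Icc (hx : x ∈ Icc a b) (hy : y ∈ Icc c d) :
    |x * y| ≤ max |a| |b| * max |c| |d| := by
  rw [abs_mul]
  exact mul_le_mul (abs_le_max_abs_of_mem_Icc hx) (abs_le_max_abs_of_mem_Icc hy)
    (abs_nonneg y) ((abs_nonneg x).trans (abs_le_max_abs_of_mem_Icc hx))

theorem mul_sub_mul_le_of_mem_Icc (hx : x ∈ Icc a b) (hx' : x' ∈ Icc a b)
    (hy : y ∈ Icc c d) (hy' : y' ∈ Icc c d) :
    x * y - x' * y' ≤ max |a| |b| * (d - c) + max |c| |d| * (b - a) := by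
  have hA : |x| ≤ max |a| |b| := abs_le_max_abs_of_mem_Icc hx
  have hC : |y'| ≤ max |c| |d| := abs_le_max_abs_of_mem_Icc hy'
  have hdy : |y - y'| ≤ d - c := abs_sub_le_of_le_of_le hy.1 hy.2 hy'.1 hy'.2
  have hdx : |x - x'| ≤ b - a := abs_sub_le_of_le_of_le hx.1 hx.2 hx'.1 hx'.2
  calc x * y - x' * y' = x * (y - y') + (x - x') * y' := by ring
    _ ≤ |x| * |y - y'| + |x - x'| * |y'| := by
        rw [← abs_mul, ← abs_mul]
        exact add_le_add (le_abs_self _) (le_abs_self _)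
    _ ≤ max |a| |b| * (d - c) + (b - a) * max |c| |d| := by
        gcongr
        exact (abs_nonneg _).trans hdx
    _ = max |a| |b| * (d - c) + max |c| |d| * (b - a) := by ring

end Products

theorem add_abs_add_div_two_eq {α : Type*} [Field α] [LinearOrder α] [IsStrictOrderedRing α]
    {a b : α} (hab : a ≤ b) : (b - a) + |a + b| / 2 = max |a| |b| + (b - a) / 2 := by
  rcases le_total 0 (a + b) with h | h
  · rw [abs_of_nonneg h, abs_of_nonneg (by linarith : 0 ≤ b),
      max_eq_right (abs_le.2 ⟨by linarith, hab⟩)]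
    ring
  · rw [abs_of_nonpos h, abs_of_nonpos (by linarith : a ≤ 0),
      max_eq_left (abs_le.2 ⟨by linarith, by linarith⟩)]
    ring

/-- Submultiplicativity of the norm `||[a,b]|| = (b−a) + |a+b|/2` for the
classical product of intervals. -/
theorem interval_norm_submultiplicative (a b c d : ℝ) (hab : a ≤ b) (hcd : c ≤ d) :
    let m : ℝ := min (min (a * c) (a * d)) (min (b * c) (b * d))
    let M : ℝ := max (max (a * c) (a * d)) (max (b * c) (b * d))
    (M - m) + |M + m| / 2 ≤ ((b - a) + |a + b| / 2) * ((d - c) + |c + d| / 2) := by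
  intro m M
  obtain ⟨x, hx, y, hy, hM⟩ := exists_mem_pair_eq_max_max (· * ·) a b c d
  obtain ⟨x', hx', y', hy', hm⟩ := exists_mem_pair_eq_min_min (· * ·) a b c d
  replace hx := pair_subset_Icc hab hx
  replace hx' := pair_subset_Icc hab hx'
  replace hy := pair_subset_Icc hcd hy
  replace hy' := pair_subset_Icc hcd hy'
  have hmM : m ≤ M := (min_le_left _ _).trans <| (min_le_left _ _).trans <|
    (le_max_left _ _).trans (le_max_left _ _)
  have hbound : max |m| |M| ≤ max |a| |b| * max |c| |d| := by
    change max |min _ _| |max _ _| ≤ _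
    rw [hm, hM]
    exact max_le (abs_mul_le_of_mem_Icc hx' hy') (abs_mul_le_of_mem_Icc hx hy)
  have hwidth : M - m ≤ max |a| |b| * (d - c) + max |c| |d| * (b - a) := by
    change max _ _ - min _ _ ≤ _
    rw [hm, hM]
    exact mul_sub_mul_le_of_mem_Icc hx hx' hy hy'
  rw [add_comm M m, add_abs_add_div_two_eq hmM, add_abs_add_div_two_eq hab,
    add_abs_add_div_two_eq hcd]
  linarith [mul_nonneg (sub_nonneg.2 hab) (sub_nonneg.2 hcd)]
end

section
/- Let X = [x₁, x₂] and Y = [y₁, y₂] be intervals (x₁ ≤ x₂, y₁ ≤ y₂), and suppose x₁x₂ > 0 or y₁y₂ > 0. Then φ(X·Y) = φ(X) · φ(Y), where X·Y is the classical product of intervals and the product on the right is the 𝒜₄ product on ℝ⁴. -/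
/-!
Writing `a⁺, a⁻` for the positive and negative parts, `φ X = (x₁⁺, x₂⁺, x₁⁻, x₂⁻)`.
For any two intervals, each coordinate of `φ (X·Y)` is the maximum of two products of such
parts, e.g. `(max X·Y)⁺ = max (x₂⁺ y₂⁺) (x₁⁻ y₁⁻)`, while the same coordinate of `φ X · φ Y`
is their sum. These agree as soon as one of the two products vanishes. In the first and last
coordinates one always does; in the middle two both are nonzero exactly when `X` and `Y` both
straddle `0`, which `x₁x₂ > 0 ∨ y₁y₂ > 0` excludes.
-/

/-- The product of the algebra `𝒜₄` on `ℝ⁴`. -/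
def A4mul (x y : ℝ × ℝ × ℝ × ℝ) : ℝ × ℝ × ℝ × ℝ :=
  (x.1 * y.1 + x.2.2.2 * y.2.2.2,
   x.2.1 * y.2.1 + x.2.2.1 * y.2.2.1,
   x.2.2.1 * y.2.1 + x.2.1 * y.2.2.1,
   x.2.2.2 * y.1 + x.1 * y.2.2.2)

/-- The classical product of intervals (given by their pairs of endpoints). -/
def Imul (X Y : ℝ × ℝ) : ℝ × ℝ :=
  (min (min (X.1 * Y.1) (X.1 * Y.2)) (min (X.2 * Y.1) (X.2 * Y.2)),
   max (max (X.1 * Y.1) (X.1 * Y.2)) (max (X.2 * Y.1) (X.2 * Y.2)))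

/-- The embedding `φ` of intervals into `𝒜₄` (the branches agree on overlaps). -/
noncomputable def phi (X : ℝ × ℝ) : ℝ × ℝ × ℝ × ℝ :=
  if 0 ≤ X.1 then (X.1, X.2, 0, 0)
  else if 0 ≤ X.2 then (0, X.2, -X.1, 0)
  else (0, 0, -X.1, -X.2)

section PosNegPart

variable {α : Type*} [Ring α] [LinearOrder α] [IsStrictOrderedRing α] {a b x y : α}

lemma posPart_mul_negPart_eq_zero_of_le (h : a ≤ b) : a⁺ * b⁻ = 0 := by
  rcases le_total a 0 with ha | ha
  · rw [posPart_eq_zero.mpr ha, zero_mul]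
  · rw [negPart_eq_zero.mpr (ha.trans h), mul_zero]

lemma posPart_mul_negPart_eq_zero_of_mul_pos (h : 0 < a * b) : b⁺ * a⁻ = 0 := by
  rcases mul_pos_iff.mp h with ⟨ha, -⟩ | ⟨-, hb⟩
  · rw [negPart_eq_zero.mpr ha.le, mul_zero]
  · rw [posPart_eq_zero.mpr hb.le, zero_mul]

lemma max_eq_add_of_mul_eq_zero (ha : 0 ≤ a) (hb : 0 ≤ b) (h : a * b = 0) :
    max a b = a + b := by
  rcases mul_eq_zero.mp h with rfl | rfl
  · rw [max_eq_right hb, zero_add]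
  · rw [max_eq_left ha, add_zero]

lemma posPart_mul_posPart_le_posPart_mul (hx : a ≤ x) (hy : b ≤ y) : a⁺ * b⁺ ≤ (x * y)⁺ := by
  rcases le_total a 0 with ha | ha
  · simp [posPart_eq_zero.mpr ha]
  rcases le_total b 0 with hb | hb
  · simp [posPart_eq_zero.mpr hb]
  rw [posPart_eq_self.mpr ha, posPart_eq_self.mpr hb]
  exact (mul_le_mul hx hy hb (ha.trans hx)).trans (le_posPart _)

lemma negPart_mul_negPart_le_posPart_mul (hx : x ≤ a) (hy : y ≤ b) : a⁻ * b⁻ ≤ (x * y)⁺ := by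
  simpa [← posPart_neg] using posPart_mul_posPart_le_posPart_mul (neg_le_neg hx) (neg_le_neg hy)

lemma mul_le_max_posPart_mul_negPart {x₁ x₂ y₁ y₂ : α} (hx₁ : x₁ ≤ x) (hx₂ : x ≤ x₂)
    (hy₁ : y₁ ≤ y) (hy₂ : y ≤ y₂) : x * y ≤ max (x₂⁺ * y₂⁺) (x₁⁻ * y₁⁻) := by
  rcases le_total 0 x with hx | hx <;> rcases le_total 0 y with hy | hy
  · exact le_max_of_le_left <| mul_le_mul (hx₂.trans (le_posPart _)) (hy₂.trans (le_posPart _))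
      hy (posPart_nonneg _)
  · exact (mul_nonpos_of_nonneg_of_nonpos hx hy).trans <|
      le_max_of_le_left (mul_nonneg (posPart_nonneg _) (posPart_nonneg _))
  · exact (mul_nonpos_of_nonpos_of_nonneg hx hy).trans <|
      le_max_of_le_left (mul_nonneg (posPart_nonneg _) (posPart_nonneg _))
  · rw [← neg_mul_neg]
    exact le_max_of_le_right <| mul_le_mul ((neg_le_neg hx₁).trans (neg_le_negPart _))
      ((neg_le_neg hy₁).trans (neg_le_negPart _)) (neg_nonneg.mpr hy) (negPart_nonneg _)

end PosNegPart

open Set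

lemma phi_eq_posPart_negPart {X : ℝ × ℝ} (hX : X.1 ≤ X.2) :
    phi X = (X.1⁺, X.2⁺, X.1⁻, X.2⁻) := by
  unfold phi
  split_ifs with h₁ h₂
  · simp [h₁, h₁.trans hX]
  · simp [le_of_not_ge h₁, h₂]
  · simp [le_of_not_ge h₁, le_of_not_ge h₂]

lemma fst_Imul_le_snd_Imul (X Y : ℝ × ℝ) : (Imul X Y).1 ≤ (Imul X Y).2 :=
  (min_le_left _ _).trans <| (min_le_left _ _).trans <| (le_max_left _ _).trans (le_max_left _ _)

lemma neg_fst_Imul (X Y : ℝ × ℝ) : -(Imul X Y).1 = (Imul (-X.2, -X.1) Y).2 := by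
  simp only [Imul, neg_inf, neg_mul]
  exact max_comm _ _

lemma neg_snd_Imul (X Y : ℝ × ℝ) : -(Imul X Y).2 = (Imul X (-Y.2, -Y.1)).1 := by
  simp only [Imul, neg_sup, mul_neg]
  rw [min_comm (-(X.1 * Y.1)), min_comm (-(X.2 * Y.1))]

lemma fst_Imul_le_max (X Y : ℝ × ℝ) : (Imul X Y).1 ≤ max (X.1⁺ * Y.1⁺) (X.2⁻ * Y.2⁻) := by
  obtain ⟨x₁, x₂⟩ := X
  obtain ⟨y₁, y₂⟩ := Y
  have hR : 0 ≤ max (x₁⁺ * y₁⁺) (x₂⁻ * y₂⁻) :=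
    le_max_of_le_left (mul_nonneg (posPart_nonneg _) (posPart_nonneg _))
  have h₁₁ : min (min (x₁ * y₁) (x₁ * y₂)) (min (x₂ * y₁) (x₂ * y₂)) ≤ x₁ * y₁ :=
    min_le_of_left_le (min_le_left _ _)
  have h₁₂ : min (min (x₁ * y₁) (x₁ * y₂)) (min (x₂ * y₁) (x₂ * y₂)) ≤ x₁ * y₂ :=
    min_le_of_left_le (min_le_right _ _)
  have h₂₂ : min (min (x₁ * y₁) (x₁ * y₂)) (min (x₂ * y₁) (x₂ * y₂)) ≤ x₂ * y₂ :=
    min_le_of_right_le (min_le_right _ _)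
  simp only [Imul]
  rcases le_total 0 x₁ with hx₁ | hx₁
  · rcases le_total 0 y₁ with hy₁ | hy₁
    · rw [posPart_eq_self.mpr hx₁, posPart_eq_self.mpr hy₁]
      exact h₁₁.trans (le_max_left _ _)
    · exact h₁₁.trans ((mul_nonpos_of_nonneg_of_nonpos hx₁ hy₁).trans hR)
  rcases le_total 0 y₂ with hy₂ | hy₂
  · exact h₁₂.trans ((mul_nonpos_of_nonpos_of_nonneg hx₁ hy₂).trans hR)
  rcases le_total 0 x₂ with hx₂ | hx₂
  · exact h₂₂.trans ((mul_nonpos_of_nonneg_of_nonpos hx₂ hy₂).trans hR)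
  · rw [negPart_eq_neg.mpr hx₂, negPart_eq_neg.mpr hy₂, neg_mul_neg]
    exact h₂₂.trans (le_max_right _ _)

section Imul

variable {X Y : ℝ × ℝ} {c : ℝ}

lemma snd_Imul_le_of_forall (hX : X.1 ≤ X.2) (hY : Y.1 ≤ Y.2)
    (h : ∀ x ∈ Icc X.1 X.2, ∀ y ∈ Icc Y.1 Y.2, x * y ≤ c) : (Imul X Y).2 ≤ c :=
  max_le (max_le (h _ ⟨le_rfl, hX⟩ _ ⟨le_rfl, hY⟩) (h _ ⟨le_rfl, hX⟩ _ ⟨hY, le_rfl⟩))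
    (max_le (h _ ⟨hX, le_rfl⟩ _ ⟨le_rfl, hY⟩) (h _ ⟨hX, le_rfl⟩ _ ⟨hY, le_rfl⟩))

lemma le_posPart_fst_Imul_of_forall (hX : X.1 ≤ X.2) (hY : Y.1 ≤ Y.2)
    (h : ∀ x ∈ Icc X.1 X.2, ∀ y ∈ Icc Y.1 Y.2, c ≤ (x * y)⁺) : c ≤ (Imul X Y).1⁺ := by
  simp only [Imul, posPart_min]
  exact le_min (le_min (h _ ⟨le_rfl, hX⟩ _ ⟨le_rfl, hY⟩) (h _ ⟨le_rfl, hX⟩ _ ⟨hY, le_rfl⟩))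
    (le_min (h _ ⟨hX, le_rfl⟩ _ ⟨le_rfl, hY⟩) (h _ ⟨hX, le_rfl⟩ _ ⟨hY, le_rfl⟩))

lemma posPart_fst_Imul (hX : X.1 ≤ X.2) (hY : Y.1 ≤ Y.2) :
    (Imul X Y).1⁺ = max (X.1⁺ * Y.1⁺) (X.2⁻ * Y.2⁻) := by
  refine le_antisymm ?_ (max_le ?_ ?_)
  · exact posPart_def (Imul X Y).1 ▸ max_le (fst_Imul_le_max X Y)
      (le_max_of_le_left (mul_nonneg (posPart_nonneg _) (posPart_nonneg _)))
  · exact le_posPart_fst_Imul_of_forall hX hY fun x hx y hy ↦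
      posPart_mul_posPart_le_posPart_mul hx.1 hy.1
  · exact le_posPart_fst_Imul_of_forall hX hY fun x hx y hy ↦
      negPart_mul_negPart_le_posPart_mul hx.2 hy.2

lemma posPart_snd_Imul (hX : X.1 ≤ X.2) (hY : Y.1 ≤ Y.2) :
    (Imul X Y).2⁺ = max (X.2⁺ * Y.2⁺) (X.1⁻ * Y.1⁻) := by
  refine le_antisymm ?_ (max_le ?_ ?_)
  · exact posPart_def (Imul X Y).2 ▸ max_le (snd_Imul_le_of_forall hX hY fun x hx y hy ↦
      mul_le_max_posPart_mul_negPart hx.1 hx.2 hy.1 hy.2)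
      (le_max_of_le_left (mul_nonneg (posPart_nonneg _) (posPart_nonneg _)))
  · exact (posPart_mul_posPart_le_posPart_mul le_rfl le_rfl).trans
      (posPart_mono ((le_max_right _ _).trans (le_max_right _ _)))
  · exact (negPart_mul_negPart_le_posPart_mul le_rfl le_rfl).trans
      (posPart_mono ((le_max_left _ _).trans (le_max_left _ _)))

lemma negPart_fst_Imul (hX : X.1 ≤ X.2) (hY : Y.1 ≤ Y.2) :
    (Imul X Y).1⁻ = max (X.1⁻ * Y.2⁺) (X.2⁺ * Y.1⁻) := by
  rw [← posPart_neg, neg_fst_Imul, posPart_snd_Imul (neg_le_neg hX) hY, posPart_neg,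
    negPart_neg]

lemma negPart_snd_Imul (hX : X.1 ≤ X.2) (hY : Y.1 ≤ Y.2) :
    (Imul X Y).2⁻ = max (X.2⁻ * Y.1⁺) (X.1⁺ * Y.2⁻) := by
  rw [← posPart_neg, neg_snd_Imul, posPart_fst_Imul hX (neg_le_neg hY), posPart_neg, negPart_neg,
    max_comm]

end Imul

/-- If `x₁x₂ > 0` or `y₁y₂ > 0`, then `φ(X·Y) = φ(X)·φ(Y)`. -/
theorem phi_mul_of_sign (X Y : ℝ × ℝ) (hX : X.1 ≤ X.2) (hY : Y.1 ≤ Y.2)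
    (h : 0 < X.1 * X.2 ∨ 0 < Y.1 * Y.2) :
    phi (Imul X Y) = A4mul (phi X) (phi Y) := by
  have hX₀ := posPart_mul_negPart_eq_zero_of_le hX
  have hXY : X.2⁺ * X.1⁻ * (Y.2⁺ * Y.1⁻) = 0 :=
    mul_eq_zero.mpr (h.imp posPart_mul_negPart_eq_zero_of_mul_pos
      posPart_mul_negPart_eq_zero_of_mul_pos)
  rw [phi_eq_posPart_negPart hX, phi_eq_posPart_negPart hY,
    phi_eq_posPart_negPart (fst_Imul_le_snd_Imul X Y), posPart_fst_Imul hX hY,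
    posPart_snd_Imul hX hY, negPart_fst_Imul hX hY, negPart_snd_Imul hX hY]
  simp only [A4mul, Prod.mk.injEq]
  refine ⟨?_, ?_, ?_, ?_⟩ <;>
    refine max_eq_add_of_mul_eq_zero (by positivity) (by positivity) ?_
  · linear_combination (Y.1⁺ * Y.2⁻) * hX₀
  · linear_combination hXY
  · linear_combination hXY
  · linear_combination (Y.1⁺ * Y.2⁻) * hX₀
end

section
/- Let X = [x₁, x₂] and Y = [y₁, y₂] be intervals with x₁ < 0 < x₂ and y₁ < 0 < y₂ (i.e. x₁x₂ < 0 and y₁y₂ < 0). Then the classical product X·Y is contained in the interval [x₁y₂ + x₂y₁, x₁y₁ + x₂y₂]: one has x₁y₂ + x₂y₁ ≤ min(x₁y₁, x₁y₂, x₂y₁, x₂y₂) and max(x₁y₁, x₁y₂, x₂y₁, x₂y₂) ≤ x₁y₁ + x₂y₂. (The interval [x₁y₂ + x₂y₁, x₁y₁ + x₂y₂] is the interval represented by the 𝒜₄ product φ(X)·φ(Y).) -/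
/-! For `x ∈ [x₁, x₂]` and `y ∈ [y₁, y₂]`, moving `y` to the endpoint whose sign matches
that of `x` (then `x` to its endpoint of that sign) bounds `x * y` above by `x₁y₁` or `x₂y₂`,
both nonnegative, hence by their sum; symmetrically it is bounded below by `x₁y₂` or `x₂y₁`,
both nonpositive, hence by their sum. -/

open Set

section Box

variable {α : Type*} [Ring α] [LinearOrder α] [IsOrderedRing α]
  {x₁ x₂ y₁ y₂ x y : α}

theorem mul_le_mul_add_mul_of_mem_Icc (hx₁ : x₁ ≤ 0) (hx₂ : 0 ≤ x₂) (hy₁ : y₁ ≤ 0)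
    (hy₂ : 0 ≤ y₂) (hx : x ∈ Icc x₁ x₂) (hy : y ∈ Icc y₁ y₂) :
    x * y ≤ x₁ * y₁ + x₂ * y₂ := by
  rcases le_total 0 x with hx0 | hx0
  · calc x * y ≤ x * y₂ := mul_le_mul_of_nonneg_left hy.2 hx0
      _ ≤ x₂ * y₂ := mul_le_mul_of_nonneg_right hx.2 hy₂
      _ ≤ x₁ * y₁ + x₂ * y₂ :=
        le_add_of_nonneg_left (mul_nonneg_of_nonpos_of_nonpos hx₁ hy₁)
  · calc x * y ≤ x * y₁ := mul_le_mul_of_nonpos_left hy.1 hx0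
      _ ≤ x₁ * y₁ := mul_le_mul_of_nonpos_right hx.1 hy₁
      _ ≤ x₁ * y₁ + x₂ * y₂ := le_add_of_nonneg_right (mul_nonneg hx₂ hy₂)

theorem mul_add_mul_le_mul_of_mem_Icc (hx₁ : x₁ ≤ 0) (hx₂ : 0 ≤ x₂) (hy₁ : y₁ ≤ 0)
    (hy₂ : 0 ≤ y₂) (hx : x ∈ Icc x₁ x₂) (hy : y ∈ Icc y₁ y₂) :
    x₁ * y₂ + x₂ * y₁ ≤ x * y := by
  rcases le_total 0 x with hx0 | hx0
  · calc x₁ * y₂ + x₂ * y₁ ≤ x₂ * y₁ :=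
          add_le_of_nonpos_left (mul_nonpos_of_nonpos_of_nonneg hx₁ hy₂)
      _ ≤ x * y₁ := mul_le_mul_of_nonpos_right hx.2 hy₁
      _ ≤ x * y := mul_le_mul_of_nonneg_left hy.1 hx0
  · calc x₁ * y₂ + x₂ * y₁ ≤ x₁ * y₂ :=
          add_le_of_nonpos_right (mul_nonpos_of_nonneg_of_nonpos hx₂ hy₁)
      _ ≤ x * y₂ := mul_le_mul_of_nonneg_right hx.1 hy₂
      _ ≤ x * y := mul_le_mul_of_nonpos_left hy.2 hx0

end Box

/-- If `x₁ < 0 < x₂` and `y₁ < 0 < y₂`, the classical product `X·Y` is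
contained in `[x₁y₂ + x₂y₁, x₁y₁ + x₂y₂]` (the interval represented by the
`𝒜₄` product `φ(X)·φ(Y)`). -/
theorem classical_product_subset_A4_product (x₁ x₂ y₁ y₂ : ℝ)
    (hx₁ : x₁ < 0) (hx₂ : 0 < x₂) (hy₁ : y₁ < 0) (hy₂ : 0 < y₂) :
    x₁ * y₂ + x₂ * y₁ ≤
        min (min (x₁ * y₁) (x₁ * y₂)) (min (x₂ * y₁) (x₂ * y₂)) ∧
      max (max (x₁ * y₁) (x₁ * y₂)) (max (x₂ * y₁) (x₂ * y₂)) ≤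
        x₁ * y₁ + x₂ * y₂ := by
  have lower {x y : ℝ} (hx : x ∈ Icc x₁ x₂) (hy : y ∈ Icc y₁ y₂) :=
    mul_add_mul_le_mul_of_mem_Icc hx₁.le hx₂.le hy₁.le hy₂.le hx hy
  have upper {x y : ℝ} (hx : x ∈ Icc x₁ x₂) (hy : y ∈ Icc y₁ y₂) :=
    mul_le_mul_add_mul_of_mem_Icc hx₁.le hx₂.le hy₁.le hy₂.le hx hy
  have hx₁' : x₁ ∈ Icc x₁ x₂ := left_mem_Icc.2 (hx₁.trans hx₂).le
  have hx₂' : x₂ ∈ Icc x₁ x₂ := right_mem_Icc.2 (hx₁.trans hx₂).le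
  have hy₁' : y₁ ∈ Icc y₁ y₂ := left_mem_Icc.2 (hy₁.trans hy₂).le
  have hy₂' : y₂ ∈ Icc y₁ y₂ := right_mem_Icc.2 (hy₁.trans hy₂).le
  exact ⟨le_min (le_min (lower hx₁' hy₁') (lower hx₁' hy₂'))
      (le_min (lower hx₂' hy₁') (lower hx₂' hy₂')),
    max_le (max_le (upper hx₁' hy₁') (upper hx₁' hy₂'))
      (max_le (upper hx₂' hy₁') (upper hx₂' hy₂'))⟩
end

section
/- Monotony of the product: let X₁ = [a₁, b₁], X₂ = [a₂, b₂] and Z = [c, d] be intervals with X₁ ⊆ X₂ (i.e. a₂ ≤ a₁ and b₁ ≤ b₂). Then X₁ • Z ⊆ X₂ • Z, where • is the product induced by the algebra 𝒜₄. -/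
/-- The product of intervals induced by the algebra `𝒜₄`:
`[a,b] • [c,d] = [ad + bc, ac + bd]` when both intervals contain `0`,
and the classical product otherwise. -/
noncomputable def bmul (X Y : ℝ × ℝ) : ℝ × ℝ :=
  if X.1 ≤ 0 ∧ 0 ≤ X.2 ∧ Y.1 ≤ 0 ∧ 0 ≤ Y.2 then
    (X.1 * Y.2 + X.2 * Y.1, X.1 * Y.1 + X.2 * Y.2)
  else Imul X Y

/-!
If `X₁ • Z` is given by the `𝒜₄` formula, so is `X₂ • Z`, and the formula is monotone in the
first interval because `Z` straddles `0`. Otherwise `X₁ • Z` is the classical product, whose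
endpoints are products `x * z` with `x` an endpoint of `X₁ ⊆ X₂` and `z` an endpoint of `Z`;
these lie in the classical product of `X₂` and `Z`, which is contained in `X₂ • Z`.
-/

open Set

lemma min_mul_le_mul {a b x : ℝ} (hx : x ∈ Icc a b) (z : ℝ) : min (a * z) (b * z) ≤ x * z := by
  rcases le_total 0 z with hz | hz
  · exact (min_le_left _ _).trans (mul_le_mul_of_nonneg_right hx.1 hz)
  · exact (min_le_right _ _).trans (mul_le_mul_of_nonpos_right hx.2 hz)

lemma mul_le_max_mul {a b x : ℝ} (hx : x ∈ Icc a b) (z : ℝ) : x * z ≤ max (a * z) (b * z) := by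
  rcases le_total 0 z with hz | hz
  · exact (mul_le_mul_of_nonneg_right hx.2 hz).trans (le_max_right _ _)
  · exact (mul_le_mul_of_nonpos_right hx.1 hz).trans (le_max_left _ _)

section Imul

variable {X Y : ℝ × ℝ} {x : ℝ}

lemma Imul_fst_le_mul_fst (hx : x ∈ Icc X.1 X.2) : (Imul X Y).1 ≤ x * Y.1 :=
  (le_min (min_le_of_left_le (min_le_left _ _)) (min_le_of_right_le (min_le_left _ _))).trans
    (min_mul_le_mul hx _)

lemma Imul_fst_le_mul_snd (hx : x ∈ Icc X.1 X.2) : (Imul X Y).1 ≤ x * Y.2 :=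
  (le_min (min_le_of_left_le (min_le_right _ _)) (min_le_of_right_le (min_le_right _ _))).trans
    (min_mul_le_mul hx _)

lemma mul_fst_le_Imul_snd (hx : x ∈ Icc X.1 X.2) : x * Y.1 ≤ (Imul X Y).2 :=
  (mul_le_max_mul hx _).trans
    (max_le (le_max_of_le_left (le_max_left _ _)) (le_max_of_le_right (le_max_left _ _)))

lemma mul_snd_le_Imul_snd (hx : x ∈ Icc X.1 X.2) : x * Y.2 ≤ (Imul X Y).2 :=
  (mul_le_max_mul hx _).trans
    (max_le (le_max_of_le_left (le_max_right _ _)) (le_max_of_le_right (le_max_right _ _)))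

lemma Imul_fst_anti_left {X₁ X₂ : ℝ × ℝ} (ha : X₁.1 ∈ Icc X₂.1 X₂.2) (hb : X₁.2 ∈ Icc X₂.1 X₂.2) :
    (Imul X₂ Y).1 ≤ (Imul X₁ Y).1 :=
  le_min (le_min (Imul_fst_le_mul_fst ha) (Imul_fst_le_mul_snd ha))
    (le_min (Imul_fst_le_mul_fst hb) (Imul_fst_le_mul_snd hb))

lemma Imul_snd_mono_left {X₁ X₂ : ℝ × ℝ} (ha : X₁.1 ∈ Icc X₂.1 X₂.2) (hb : X₁.2 ∈ Icc X₂.1 X₂.2) :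
    (Imul X₁ Y).2 ≤ (Imul X₂ Y).2 :=
  max_le (max_le (mul_fst_le_Imul_snd ha) (mul_snd_le_Imul_snd ha))
    (max_le (mul_fst_le_Imul_snd hb) (mul_snd_le_Imul_snd hb))

end Imul

section bmul

variable {X Y : ℝ × ℝ}

lemma bmul_of_zero_mem (h : X.1 ≤ 0 ∧ 0 ≤ X.2 ∧ Y.1 ≤ 0 ∧ 0 ≤ Y.2) :
    bmul X Y = (X.1 * Y.2 + X.2 * Y.1, X.1 * Y.1 + X.2 * Y.2) :=
  if_pos h

lemma bmul_of_not_zero_mem (h : ¬(X.1 ≤ 0 ∧ 0 ≤ X.2 ∧ Y.1 ≤ 0 ∧ 0 ≤ Y.2)) :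
    bmul X Y = Imul X Y :=
  if_neg h

lemma bmul_fst_le_Imul_fst : (bmul X Y).1 ≤ (Imul X Y).1 := by
  by_cases h : X.1 ≤ 0 ∧ 0 ≤ X.2 ∧ Y.1 ≤ 0 ∧ 0 ≤ Y.2
  · obtain ⟨ha, hb, hc, hd⟩ := h
    rw [bmul_of_zero_mem ⟨ha, hb, hc, hd⟩]
    refine le_min (le_min ?_ ?_) (le_min ?_ ?_) <;> dsimp only <;>
      nlinarith [mul_nonpos_of_nonpos_of_nonneg ha hd, mul_nonpos_of_nonneg_of_nonpos hb hc]
  · rw [bmul_of_not_zero_mem h]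

lemma Imul_snd_le_bmul_snd : (Imul X Y).2 ≤ (bmul X Y).2 := by
  by_cases h : X.1 ≤ 0 ∧ 0 ≤ X.2 ∧ Y.1 ≤ 0 ∧ 0 ≤ Y.2
  · obtain ⟨ha, hb, hc, hd⟩ := h
    rw [bmul_of_zero_mem ⟨ha, hb, hc, hd⟩]
    refine max_le (max_le ?_ ?_) (max_le ?_ ?_) <;> dsimp only <;>
      nlinarith [mul_nonneg_of_nonpos_of_nonpos ha hc, mul_nonneg hb hd]
  · rw [bmul_of_not_zero_mem h]

end bmul

theorem bmul_monotone_general (X₁ X₂ Z : ℝ × ℝ)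
    (hX₁ : X₁.1 ≤ X₁.2)
    (h₁ : X₂.1 ≤ X₁.1) (h₂ : X₁.2 ≤ X₂.2) :
    (bmul X₂ Z).1 ≤ (bmul X₁ Z).1 ∧ (bmul X₁ Z).2 ≤ (bmul X₂ Z).2 := by
  by_cases h : X₁.1 ≤ 0 ∧ 0 ≤ X₁.2 ∧ Z.1 ≤ 0 ∧ 0 ≤ Z.2
  · obtain ⟨ha, hb, hc, hd⟩ := h
    rw [bmul_of_zero_mem ⟨ha, hb, hc, hd⟩, bmul_of_zero_mem ⟨h₁.trans ha, hb.trans h₂, hc, hd⟩]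
    exact ⟨add_le_add (mul_le_mul_of_nonneg_right h₁ hd) (mul_le_mul_of_nonpos_right h₂ hc),
      add_le_add (mul_le_mul_of_nonpos_right h₁ hc) (mul_le_mul_of_nonneg_right h₂ hd)⟩
  · have ha : X₁.1 ∈ Icc X₂.1 X₂.2 := ⟨h₁, hX₁.trans h₂⟩
    have hb : X₁.2 ∈ Icc X₂.1 X₂.2 := ⟨h₁.trans hX₁, h₂⟩
    rw [bmul_of_not_zero_mem h]
    exact ⟨bmul_fst_le_Imul_fst.trans (Imul_fst_anti_left ha hb),
      (Imul_snd_mono_left ha hb).trans Imul_snd_le_bmul_snd⟩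

/-- Monotony of the `𝒜₄`-induced product: `X₁ ⊆ X₂` implies `X₁ • Z ⊆ X₂ • Z`. -/
theorem bmul_monotone (X₁ X₂ Z : ℝ × ℝ)
    (hX₁ : X₁.1 ≤ X₁.2) (hX₂ : X₂.1 ≤ X₂.2) (hZ : Z.1 ≤ Z.2)
    (h₁ : X₂.1 ≤ X₁.1) (h₂ : X₁.2 ≤ X₂.2) :
    (bmul X₂ Z).1 ≤ (bmul X₁ Z).1 ∧ (bmul X₁ Z).2 ≤ (bmul X₂ Z).2 :=
  bmul_monotone_general X₁ X₂ Z hX₁ h₁ h₂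
end

section
/- Division by an invertible element: let X = [x₁, x₂] and Y = [y₁, y₂] with 0 < x₁ ≤ x₂ and 0 < y₁ ≤ y₂. If y₂/y₁ ≥ x₂/x₁ (equivalently x₂y₁ ≤ x₁y₂), then there exists a unique interval Z = [z₁, z₂] with 0 ≤ z₁ ≤ z₂ such that Y = X·Z for the classical interval product, namely y₁ = x₁z₁ and y₂ = x₂z₂ (so z₁ = y₁/x₁ and z₂ = y₂/x₂). -/
/-! For intervals of nonnegative reals the product is endpointwise, so dividing `Y` by `X`
amounts to dividing endpoints, `Z = [y₁/x₁, y₂/x₂]`; the hypothesis `x₂y₁ ≤ x₁y₂` is exactly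
what makes this `Z` an interval. -/

lemma imul_eq_of_nonneg {x₁ x₂ z₁ z₂ : ℝ} (hx₁ : 0 ≤ x₁) (hx : x₁ ≤ x₂)
    (hz₁ : 0 ≤ z₁) (hz : z₁ ≤ z₂) :
    Imul (x₁, x₂) (z₁, z₂) = (x₁ * z₁, x₂ * z₂) := by
  have h₁₁_le_h₁₂ : x₁ * z₁ ≤ x₁ * z₂ := mul_le_mul_of_nonneg_left hz hx₁
  have h₁₁_le_h₂₁ : x₁ * z₁ ≤ x₂ * z₁ := mul_le_mul_of_nonneg_right hx hz₁
  have h₂₁_le_h₂₂ : x₂ * z₁ ≤ x₂ * z₂ := mul_le_mul_of_nonneg_left hz (hx₁.trans hx)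
  have h₁₂_le_h₂₂ : x₁ * z₂ ≤ x₂ * z₂ := mul_le_mul_of_nonneg_right hx (hz₁.trans hz)
  simp only [Imul, min_eq_left h₁₁_le_h₁₂, min_eq_left h₂₁_le_h₂₂, min_eq_left h₁₁_le_h₂₁,
    max_eq_right h₁₁_le_h₁₂, max_eq_right h₂₁_le_h₂₂, max_eq_right h₁₂_le_h₂₂]

lemma imul_eq_iff_eq_div {x₁ x₂ z₁ z₂ y₁ y₂ : ℝ} (hx₁ : 0 < x₁) (hx : x₁ ≤ x₂)
    (hz₁ : 0 ≤ z₁) (hz : z₁ ≤ z₂) :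
    Imul (x₁, x₂) (z₁, z₂) = (y₁, y₂) ↔ (z₁, z₂) = (y₁ / x₁, y₂ / x₂) := by
  rw [imul_eq_of_nonneg hx₁.le hx hz₁ hz, Prod.mk.injEq, Prod.mk.injEq,
    eq_div_iff hx₁.ne', eq_div_iff (hx₁.trans_le hx).ne', mul_comm z₁, mul_comm z₂]

theorem division_by_invertible_general (x₁ x₂ y₁ y₂ : ℝ)
    (hx₁ : 0 < x₁) (hx : x₁ ≤ x₂) (hy₁ : 0 < y₁)
    (h : x₂ * y₁ ≤ x₁ * y₂) :
    (∃! Z : ℝ × ℝ, (0 ≤ Z.1 ∧ Z.1 ≤ Z.2) ∧ Imul (x₁, x₂) Z = (y₁, y₂)) ∧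
    (0 ≤ y₁ / x₁ ∧ y₁ / x₁ ≤ y₂ / x₂) ∧
    Imul (x₁, x₂) (y₁ / x₁, y₂ / x₂) = (y₁, y₂) := by
  have hx₂ : 0 < x₂ := hx₁.trans_le hx
  have hZ : 0 ≤ y₁ / x₁ ∧ y₁ / x₁ ≤ y₂ / x₂ :=
    ⟨by positivity, (div_le_div_iff₀ hx₁ hx₂).2 (by linarith)⟩
  have hXZ : Imul (x₁, x₂) (y₁ / x₁, y₂ / x₂) = (y₁, y₂) :=
    (imul_eq_iff_eq_div hx₁ hx hZ.1 hZ.2).2 rfl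
  refine ⟨⟨(y₁ / x₁, y₂ / x₂), ⟨hZ, hXZ⟩, ?_⟩, hZ, hXZ⟩
  rintro ⟨z₁, z₂⟩ ⟨⟨hz₁, hz⟩, hXz⟩
  exact (imul_eq_iff_eq_div hx₁ hx hz₁ hz).1 hXz

/-- Division by an invertible element: if `0 < x₁ ≤ x₂`, `0 < y₁ ≤ y₂` and
`y₂/y₁ ≥ x₂/x₁` (i.e. `x₂y₁ ≤ x₁y₂`), then there is a unique interval
`Z = [z₁,z₂]` with `0 ≤ z₁ ≤ z₂` such that `Y = X·Z`; it is
`Z = [y₁/x₁, y₂/x₂]`. -/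
theorem division_by_invertible (x₁ x₂ y₁ y₂ : ℝ)
    (hx₁ : 0 < x₁) (hx : x₁ ≤ x₂) (hy₁ : 0 < y₁) (hy : y₁ ≤ y₂)
    (h : x₂ * y₁ ≤ x₁ * y₂) :
    (∃! Z : ℝ × ℝ, (0 ≤ Z.1 ∧ Z.1 ≤ Z.2) ∧ Imul (x₁, x₂) Z = (y₁, y₂)) ∧
    (0 ≤ y₁ / x₁ ∧ y₁ / x₁ ≤ y₂ / x₂) ∧
    Imul (x₁, x₂) (y₁ / x₁, y₂ / x₂) = (y₁, y₂) :=
  division_by_invertible_general x₁ x₂ y₁ y₂ hx₁ hx hy₁ h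
end

section
/- Division by a non-invertible element, first case: let x₁, x₂, y₁, y₂ > 0 with x₁ < x₂, x₁y₂ < x₂y₁ and x₁y₁ < x₂y₂ (i.e. x₁/x₂ < y₁/y₂ and x₁/x₂ < y₂/y₁). Then there exist z₂, z₃ ≥ 0 such that y₂ = x₂z₂ + x₁z₃ and y₁ = x₁z₂ + x₂z₃; explicitly z₂ = (x₂y₂ − x₁y₁)/(x₂² − x₁²) and z₃ = (x₂y₁ − x₁y₂)/(x₂² − x₁²). Equivalently, Y = [−y₁, y₂] satisfies Y = X • Z with X = [−x₁, x₂] and Z = [−z₃, z₂]. -/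
/-- Cramer's rule for the symmetric system `b z + a w = v`, `a z + b w = u`; the other equation
is this one with `u` and `v` exchanged. -/
theorem mul_div_sq_sub_sq_add_mul_div_sq_sub_sq {K : Type*} [Field K] {a b : K}
    (h : b ^ 2 - a ^ 2 ≠ 0) (u v : K) :
    b * ((b * v - a * u) / (b ^ 2 - a ^ 2)) + a * ((b * u - a * v) / (b ^ 2 - a ^ 2)) = v := by
  field_simp
  ring

theorem division_noninvertible_first_case_general (x₁ x₂ y₁ y₂ : ℝ)
    (hx₁ : 0 < x₁) (hx : x₁ < x₂) (h₁ : x₁ * y₂ < x₂ * y₁) (h₂ : x₁ * y₁ < x₂ * y₂) :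
    let z₂ : ℝ := (x₂ * y₂ - x₁ * y₁) / (x₂ ^ 2 - x₁ ^ 2)
    let z₃ : ℝ := (x₂ * y₁ - x₁ * y₂) / (x₂ ^ 2 - x₁ ^ 2)
    0 ≤ z₂ ∧ 0 ≤ z₃ ∧ y₂ = x₂ * z₂ + x₁ * z₃ ∧ y₁ = x₁ * z₂ + x₂ * z₃ := by
  intro z₂ z₃
  have hd : 0 < x₂ ^ 2 - x₁ ^ 2 := sub_pos.2 (pow_lt_pow_left₀ hx hx₁.le two_ne_zero)
  refine ⟨div_nonneg (sub_nonneg.2 h₂.le) hd.le, div_nonneg (sub_nonneg.2 h₁.le) hd.le,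
    (mul_div_sq_sub_sq_add_mul_div_sq_sub_sq hd.ne' y₁ y₂).symm, ?_⟩
  rw [add_comm]
  exact (mul_div_sq_sub_sq_add_mul_div_sq_sub_sq hd.ne' y₂ y₁).symm

/-- Division by a non-invertible element, first case (`x₁ < x₂`):
if `x₁/x₂ < y₁/y₂` and `x₁/x₂ < y₂/y₁`, then `z₂ = (x₂y₂ − x₁y₁)/(x₂² − x₁²)`
and `z₃ = (x₂y₁ − x₁y₂)/(x₂² − x₁²)` are nonnegative and satisfy
`y₂ = x₂z₂ + x₁z₃` and `y₁ = x₁z₂ + x₂z₃`, i.e.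
`[−y₁, y₂] = [−x₁, x₂] • [−z₃, z₂]`. -/
theorem division_noninvertible_first_case (x₁ x₂ y₁ y₂ : ℝ)
    (hx₁ : 0 < x₁) (hx₂ : 0 < x₂) (hy₁ : 0 < y₁) (hy₂ : 0 < y₂)
    (hx : x₁ < x₂) (h₁ : x₁ * y₂ < x₂ * y₁) (h₂ : x₁ * y₁ < x₂ * y₂) :
    let z₂ : ℝ := (x₂ * y₂ - x₁ * y₁) / (x₂ ^ 2 - x₁ ^ 2)
    let z₃ : ℝ := (x₂ * y₁ - x₁ * y₂) / (x₂ ^ 2 - x₁ ^ 2)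
    0 ≤ z₂ ∧ 0 ≤ z₃ ∧ y₂ = x₂ * z₂ + x₁ * z₃ ∧ y₁ = x₁ * z₂ + x₂ * z₃ :=
  division_noninvertible_first_case_general x₁ x₂ y₁ y₂ hx₁ hx h₁ h₂
end

section
/- Division by a non-invertible element, second case: let x₁, x₂, y₁, y₂ > 0 with x₁ > x₂, x₁y₂ > x₂y₁ and x₁y₁ > x₂y₂ (i.e. x₁/x₂ > y₁/y₂ and x₁/x₂ > y₂/y₁). Then there exist z₂, z₃ ≥ 0 such that y₂ = x₂z₂ + x₁z₃ and y₁ = x₁z₂ + x₂z₃; explicitly z₂ = (x₁y₁ − x₂y₂)/(x₁² − x₂²) and z₃ = (x₁y₂ − x₂y₁)/(x₁² − x₂²). Equivalently, Y = [−y₁, y₂] satisfies Y = X • Z with X = [−x₁, x₂] and Z = [−z₃, z₂]. -/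
/-! The equations form the linear system with matrix `[[x₁, x₂], [x₂, x₁]]`, whose determinant
`x₁² − x₂²` is positive because `x₁ > x₂ > 0`; `z₂, z₃` are its Cramer solution, and the two
hypotheses `x₂y₂ < x₁y₁`, `x₂y₁ < x₁y₂` say exactly that the Cramer numerators are positive. -/

theorem mul_cramer_add_mul_cramer {K : Type*} [Field K] {a b : K} (u v : K)
    (h : a ^ 2 - b ^ 2 ≠ 0) :
    a * ((a * u - b * v) / (a ^ 2 - b ^ 2)) + b * ((a * v - b * u) / (a ^ 2 - b ^ 2)) = u := by
  field_simp
  ring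

theorem division_noninvertible_second_case_general (x₁ x₂ y₁ y₂ : ℝ)
    (hx₂ : 0 < x₂) (hx : x₂ < x₁) (h₁ : x₂ * y₁ < x₁ * y₂) (h₂ : x₂ * y₂ < x₁ * y₁) :
    let z₂ : ℝ := (x₁ * y₁ - x₂ * y₂) / (x₁ ^ 2 - x₂ ^ 2)
    let z₃ : ℝ := (x₁ * y₂ - x₂ * y₁) / (x₁ ^ 2 - x₂ ^ 2)
    0 ≤ z₂ ∧ 0 ≤ z₃ ∧ y₂ = x₂ * z₂ + x₁ * z₃ ∧ y₁ = x₁ * z₂ + x₂ * z₃ := by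
  intro z₂ z₃
  have hdet : 0 < x₁ ^ 2 - x₂ ^ 2 := sub_pos.2 (pow_lt_pow_left₀ hx hx₂.le two_ne_zero)
  refine ⟨div_nonneg (sub_nonneg.2 h₂.le) hdet.le, div_nonneg (sub_nonneg.2 h₁.le) hdet.le,
    ?_, (mul_cramer_add_mul_cramer y₁ y₂ hdet.ne').symm⟩
  rw [add_comm]
  exact (mul_cramer_add_mul_cramer y₂ y₁ hdet.ne').symm

/-- Division by a non-invertible element, second case (`x₁ > x₂`):
if `x₁/x₂ > y₁/y₂` and `x₁/x₂ > y₂/y₁`, then `z₂ = (x₁y₁ − x₂y₂)/(x₁² − x₂²)`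
and `z₃ = (x₁y₂ − x₂y₁)/(x₁² − x₂²)` are nonnegative and satisfy
`y₂ = x₂z₂ + x₁z₃` and `y₁ = x₁z₂ + x₂z₃`, i.e.
`[−y₁, y₂] = [−x₁, x₂] • [−z₃, z₂]`. -/
theorem division_noninvertible_second_case (x₁ x₂ y₁ y₂ : ℝ)
    (hx₁ : 0 < x₁) (hx₂ : 0 < x₂) (hy₁ : 0 < y₁) (hy₂ : 0 < y₂)
    (hx : x₂ < x₁) (h₁ : x₂ * y₁ < x₁ * y₂) (h₂ : x₂ * y₂ < x₁ * y₁) :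
    let z₂ : ℝ := (x₁ * y₁ - x₂ * y₂) / (x₁ ^ 2 - x₂ ^ 2)
    let z₃ : ℝ := (x₁ * y₂ - x₂ * y₁) / (x₁ ^ 2 - x₂ ^ 2)
    0 ≤ z₂ ∧ 0 ≤ z₃ ∧ y₂ = x₂ * z₂ + x₁ * z₃ ∧ y₁ = x₁ * z₂ + x₂ * z₃ :=
  division_noninvertible_second_case_general x₁ x₂ y₁ y₂ hx₂ hx h₁ h₂
end

section
/- Euclidean division by a non-invertible element: let x₁, x₂, y₁, y₂ > 0 with x₁ < x₂, x₁y₁ > x₂y₂ and x₁y₂ < x₂y₁ (i.e. x₁/x₂ > y₂/y₁ and x₁/x₂ < y₁/y₂). Among all quadruples (z₂, z₃, r₁, r₂) of nonnegative reals satisfying y₂ = x₂z₂ + x₁z₃ + r₂ and y₁ = x₁z₂ + x₂z₃ + r₁ (i.e. Y = X • Z + R with X = [−x₁,x₂], Y = [−y₁,y₂], Z = [−z₃,z₂], R = [−r₁,r₂]), the quadruple (z₂, z₃, r₁, r₂) = (0, y₂/x₁, (x₁y₁ − x₂y₂)/x₁, 0) is a solution, and it is the unique solution minimizing the remainder length r₁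 + r₂. -/
/-!
Writing `s = z₂ + z₃`, the two equations give `r₁ + r₂ = y₁ + y₂ - (x₁ + x₂) s`, so minimizing the
remainder length means maximizing `s`. Since `x₁ ≤ x₂`, the first equation bounds
`x₁ s ≤ x₂ z₂ + x₁ z₃ + r₂ = y₂`, and equality there forces `(x₂ - x₁) z₂ = 0` and `r₂ = 0`.
-/

section

variable {K : Type*} [Field K] {x₁ x₂ y₁ y₂ z₂ z₃ r₁ r₂ : K}

theorem remainder_length_eq (hx₁ : x₁ ≠ 0) (e₂ : y₂ = x₂ * z₂ + x₁ * z₃ + r₂)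
    (e₁ : y₁ = x₁ * z₂ + x₂ * z₃ + r₁) :
    r₁ + r₂ = (x₁ * y₁ - x₂ * y₂) / x₁ + (x₁ + x₂) / x₁ * (y₂ - x₁ * (z₂ + z₃)) := by
  field_simp
  linear_combination (-x₁) * e₁ - x₁ * e₂

variable [LinearOrder K] [IsStrictOrderedRing K]

theorem mul_add_le_of_eq_add (hx : x₁ ≤ x₂) (hz₂ : 0 ≤ z₂) (hr₂ : 0 ≤ r₂)
    (e₂ : y₂ = x₂ * z₂ + x₁ * z₃ + r₂) : x₁ * (z₂ + z₃) ≤ y₂ := by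
  have := mul_le_mul_of_nonneg_right hx hz₂
  linarith

theorem eq_zero_of_mul_add_eq (hx : x₁ < x₂) (hz₂ : 0 ≤ z₂) (hr₂ : 0 ≤ r₂)
    (e₂ : y₂ = x₂ * z₂ + x₁ * z₃ + r₂) (h : x₁ * (z₂ + z₃) = y₂) : z₂ = 0 ∧ r₂ = 0 := by
  have hsum : (x₂ - x₁) * z₂ + r₂ = 0 := by linear_combination -e₂ - h
  have hz₂' : 0 ≤ (x₂ - x₁) * z₂ := mul_nonneg (sub_nonneg.2 hx.le) hz₂
  refine ⟨?_, by linarith⟩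
  exact (mul_eq_zero.1 (by linarith : (x₂ - x₁) * z₂ = 0)).resolve_left (sub_ne_zero.2 hx.ne')

end

theorem euclidean_division_noninvertible_general (x₁ x₂ y₁ y₂ : ℝ)
    (hx₁ : 0 < x₁) (hy₂ : 0 < y₂)
    (hx : x₁ < x₂) (h₁ : x₂ * y₂ < x₁ * y₁) :
    -- the announced quadruple is a solution
    (0 ≤ y₂ / x₁ ∧ 0 ≤ (x₁ * y₁ - x₂ * y₂) / x₁ ∧
      y₂ = x₂ * 0 + x₁ * (y₂ / x₁) + 0 ∧
      y₁ = x₁ * 0 + x₂ * (y₂ / x₁) + (x₁ * y₁ - x₂ * y₂) / x₁) ∧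
    -- it minimizes the remainder length, and is the unique minimizer
    (∀ z₂ z₃ r₁ r₂ : ℝ, 0 ≤ z₂ → 0 ≤ z₃ → 0 ≤ r₁ → 0 ≤ r₂ →
      y₂ = x₂ * z₂ + x₁ * z₃ + r₂ → y₁ = x₁ * z₂ + x₂ * z₃ + r₁ →
      (x₁ * y₁ - x₂ * y₂) / x₁ + 0 ≤ r₁ + r₂ ∧
        (r₁ + r₂ = (x₁ * y₁ - x₂ * y₂) / x₁ + 0 →
          z₂ = 0 ∧ z₃ = y₂ / x₁ ∧ r₁ = (x₁ * y₁ - x₂ * y₂) / x₁ ∧ r₂ = 0)) := by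
  refine ⟨⟨div_nonneg hy₂.le hx₁.le, div_nonneg (by linarith) hx₁.le, by field_simp; ring,
    by field_simp; ring⟩, ?_⟩
  intro z₂ z₃ r₁ r₂ hz₂ _ _ hr₂ e₂ e₁
  have hgap : 0 ≤ y₂ - x₁ * (z₂ + z₃) := sub_nonneg.2 (mul_add_le_of_eq_add hx.le hz₂ hr₂ e₂)
  have hcoeff : 0 < (x₁ + x₂) / x₁ := div_pos (by linarith) hx₁
  rw [remainder_length_eq hx₁.ne' e₂ e₁, add_zero]
  refine ⟨le_add_of_nonneg_right (mul_nonneg hcoeff.le hgap), fun heq => ?_⟩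
  have hmax : x₁ * (z₂ + z₃) = y₂ := by
    have := (mul_eq_zero.1 (add_eq_left.1 heq)).resolve_left hcoeff.ne'
    linarith
  obtain ⟨rfl, rfl⟩ := eq_zero_of_mul_add_eq hx hz₂ hr₂ e₂ hmax
  have hz₃ : z₃ = y₂ / x₁ := by
    rw [eq_div_iff hx₁.ne']
    linarith
  refine ⟨rfl, hz₃, ?_, rfl⟩
  rw [eq_div_iff hx₁.ne']
  linear_combination (-x₁) * e₁ - x₂ * hmax

/-- Euclidean division by a non-invertible element: with `x₁ < x₂`,
`x₁y₁ > x₂y₂` and `x₁y₂ < x₂y₁`, among all nonnegative quadruples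
`(z₂, z₃, r₁, r₂)` with `y₂ = x₂z₂ + x₁z₃ + r₂` and `y₁ = x₁z₂ + x₂z₃ + r₁`
(i.e. `[−y₁,y₂] = [−x₁,x₂] • [−z₃,z₂] + [−r₁,r₂]`), the quadruple
`(0, y₂/x₁, (x₁y₁ − x₂y₂)/x₁, 0)` is a solution, and it is the unique one
minimizing the remainder length `r₁ + r₂`. -/
theorem euclidean_division_noninvertible (x₁ x₂ y₁ y₂ : ℝ)
    (hx₁ : 0 < x₁) (hx₂ : 0 < x₂) (hy₁ : 0 < y₁) (hy₂ : 0 < y₂)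
    (hx : x₁ < x₂) (h₁ : x₂ * y₂ < x₁ * y₁) (h₂ : x₁ * y₂ < x₂ * y₁) :
    -- the announced quadruple is a solution
    (0 ≤ y₂ / x₁ ∧ 0 ≤ (x₁ * y₁ - x₂ * y₂) / x₁ ∧
      y₂ = x₂ * 0 + x₁ * (y₂ / x₁) + 0 ∧
      y₁ = x₁ * 0 + x₂ * (y₂ / x₁) + (x₁ * y₁ - x₂ * y₂) / x₁) ∧
    -- it minimizes the remainder length, and is the unique minimizer
    (∀ z₂ z₃ r₁ r₂ : ℝ, 0 ≤ z₂ → 0 ≤ z₃ → 0 ≤ r₁ → 0 ≤ r₂ →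
      y₂ = x₂ * z₂ + x₁ * z₃ + r₂ → y₁ = x₁ * z₂ + x₂ * z₃ + r₁ →
      (x₁ * y₁ - x₂ * y₂) / x₁ + 0 ≤ r₁ + r₂ ∧
        (r₁ + r₂ = (x₁ * y₁ - x₂ * y₂) / x₁ + 0 →
          z₂ = 0 ∧ z₃ = y₂ / x₁ ∧ r₁ = (x₁ * y₁ - x₂ * y₂) / x₁ ∧ r₂ = 0)) :=
  euclidean_division_noninvertible_general x₁ x₂ y₁ y₂ hx₁ hy₂ hx h₁
end

section
/- The squaring function q₂ is continuous: the map f : ℝ² → ℝ² defined by f(u,v) = (u², v²) if 0 ≤ u ≤ v, f(u,v) = (v², u²) if u ≤ v ≤ 0, f(u,v) = (0, max(u², v²)) if u ≤ 0 ≤ v, and f(u,v) = f(−u,−v) if v < u, is continuous on ℝ² (equivalently, continuous with respect to the norm N(u,v) = |v − u| + |u + v|/2, which induces the standard topology of ℝ²). -/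
/-!
The pieces of `q₂` glue into a single expression in `min`, `max` and squares (`q2_eq`), so
continuity needs no case analysis at the boundaries of the pieces.
-/

/-- The squaring function `q₂` on intervals, in the coordinates of the group
completion `ℝ²`, on the half-plane `u ≤ v`. -/
noncomputable def q2aux (p : ℝ × ℝ) : ℝ × ℝ :=
  if 0 ≤ p.1 then (p.1 ^ 2, p.2 ^ 2)
  else if p.2 ≤ 0 then (p.2 ^ 2, p.1 ^ 2)
  else (0, max (p.1 ^ 2) (p.2 ^ 2))

/-- The squaring function `q₂` on all of `ℝ²`: it takes the same value on a
class and on its additive inverse. -/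
noncomputable def q2 (p : ℝ × ℝ) : ℝ × ℝ :=
  if p.2 < p.1 then q2aux (-p) else q2aux p

lemma q2aux_of_le {u v : ℝ} (h : u ≤ v) :
    q2aux (u, v) = (max u 0 ^ 2 + min v 0 ^ 2, max (u ^ 2) (v ^ 2)) := by
  unfold q2aux
  split_ifs with hu hv
  · rw [max_eq_left hu, min_eq_right (hu.trans h), max_eq_right (pow_le_pow_left₀ hu h 2)]
    simp
  · rw [max_eq_right (not_le.mp hu).le, min_eq_left hv, max_eq_left (by nlinarith)]
    simp
  · simp [max_eq_right (not_le.mp hu).le, min_eq_right (not_le.mp hv).le]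

lemma q2_eq (p : ℝ × ℝ) :
    q2 p = (max (min p.1 p.2) 0 ^ 2 + min (max p.1 p.2) 0 ^ 2, max (p.1 ^ 2) (p.2 ^ 2)) := by
  obtain ⟨u, v⟩ := p
  unfold q2
  split_ifs with h
  · have hneg : q2aux (-(u, v)) = q2aux (-u, -v) := rfl
    rw [hneg, q2aux_of_le (neg_le_neg h.le), min_eq_right h.le, max_eq_left h.le,
      ← neg_zero, max_neg_neg, min_neg_neg, neg_zero]
    simp [add_comm]
  · rw [q2aux_of_le (not_lt.mp h), min_eq_left (not_lt.mp h), max_eq_right (not_lt.mp h)]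

/-- The squaring function `q₂` is continuous on `ℝ²` (the norm
`N(u,v) = |v − u| + |u + v|/2` induces the standard topology of `ℝ²`). -/
theorem q2_continuous : Continuous q2 := by
  simp only [funext q2_eq]
  fun_prop
end
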